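/- arXiv:math/9809107 — 3 statements merged into one kernel-verified Lean document; each statement's English description precedes it below -/
import Mathlib

section
/- Let ℓ be an odd prime and F a field of characteristic ℓ. There is no nondegenerate symmetric bilinear form f₀ on F² and no injective group homomorphism from the cyclic group of order ℓ into the group of f₀-preserving linear automorphisms of F². -/
/-!
Let `g` be the image of a generator. Since `g ^ ℓ = 1` in characteristic `ℓ`, the endomorphism
`n = g - 1` satisfies `n ^ ℓ = (g - 1) ^ ℓ = g ^ ℓ - 1 = 0`, so it is nilpotent, hence `n ^ 2 = 0`
in dimension two; and `n ≠ 0` by injectivity. Expanding `f₀ (x + n x) (y + n y) = f₀ x y` and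
using `n ^ 2 = 0` shows that `n` is skew-adjoint for `f₀`. Pick `w` with `v = n w ≠ 0`: then `v`
and `w` span `F²`, `f₀ v v = f₀ (n w) (n w) = -f₀ w (n ^ 2 w) = 0`, and `f₀ v w = -f₀ w v` forces
`f₀ v w = 0` because `2 ≠ 0`. So `v` lies in the radical of `f₀`.
-/

open Module

theorem sub_one_pow_char_eq_zero {R : Type*} [Ring R] (p : ℕ) [Fact p.Prime] [CharP R p]
    {a : R} (ha : a ^ p = 1) : (a - 1) ^ p = 0 := by
  rw [sub_pow_char_of_commute p (Commute.one_right a), ha, one_pow, sub_self]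

theorem Module.End.pow_finrank_eq_zero_of_isNilpotent {R M : Type*} [CommRing R] [IsDomain R]
    [AddCommGroup M] [Module R M] [Module.Free R M] [Module.Finite R M] {φ : Module.End R M}
    (hφ : IsNilpotent φ) : φ ^ finrank R M = 0 := by
  simpa only [hφ.charpoly_eq_X_pow_finrank, map_pow, Polynomial.aeval_X] using
    φ.aeval_self_charpoly

theorem Module.End.apply_apply_eq_zero_of_sq_eq_zero {R M : Type*} [Semiring R] [AddCommMonoid M]
    [Module R M] {f : Module.End R M} (hf : f ^ 2 = 0) (x : M) : f (f x) = 0 := by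
  rw [← Module.End.mul_apply, ← sq, hf, LinearMap.zero_apply]

theorem linearIndependent_pair_apply_self {K V : Type*} [Field K] [AddCommGroup V] [Module K V]
    {n : Module.End K V} (hsq : n ^ 2 = 0) {w : V} (hw : n w ≠ 0) :
    LinearIndependent K ![n w, w] := by
  rw [LinearIndependent.pair_iff]
  intro s t hst
  have ht : t = 0 := by
    have := congrArg n hst
    simp only [map_add, map_smul, n.apply_apply_eq_zero_of_sq_eq_zero hsq, smul_zero, zero_add,
      map_zero] at this
    exact (smul_eq_zero.mp this).resolve_right hw
  subst ht
  simp only [zero_smul, add_zero] at hst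
  exact ⟨(smul_eq_zero.mp hst).resolve_right hw, rfl⟩

namespace LinearMap.BilinForm

theorem isSkewAdjoint_sub_one {R M : Type*} [CommRing R] [AddCommGroup M] [Module R M]
    {B : LinearMap.BilinForm R M} {g : Module.End R M} (hg : ∀ x y, B (g x) (g y) = B x y)
    (hsq : (g - 1) ^ 2 = 0) : B.IsSkewAdjoint ⇑(g - 1) := by
  set n := g - 1
  have expand : ∀ x y, B (n x) y + B x (n y) + B (n x) (n y) = 0 := fun x y => by
    have h := hg x y
    have hgx : ∀ x, g x = x + n x := fun x => by simp [n]
    simp only [hgx, map_add, LinearMap.add_apply] at h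
    linear_combination h
  intro x y
  have hnn : B (n x) (n y) = 0 := by
    simpa [n.apply_apply_eq_zero_of_sq_eq_zero hsq] using expand (n x) y
  simp only [Pi.neg_apply, map_neg]
  linear_combination expand x y - hnn

theorem not_nondegenerate_of_isSkewAdjoint_of_sq_eq_zero {K V : Type*} [Field K] [AddCommGroup V]
    [Module K V] {B : LinearMap.BilinForm K V} (hB : B.IsSymm) (h2 : (2 : K) ≠ 0)
    (hV : finrank K V = 2) {n : Module.End K V} (hskew : B.IsSkewAdjoint n) (hn : n ≠ 0)
    (hsq : n ^ 2 = 0) : ¬ B.Nondegenerate := by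
  obtain ⟨w, hw⟩ : ∃ w, n w ≠ 0 := by
    by_contra! h
    exact hn (LinearMap.ext h)
  have : FiniteDimensional K V := Module.finite_of_finrank_eq_succ hV
  have hspan : Submodule.span K (Set.range ![n w, w]) = ⊤ :=
    (linearIndependent_pair_apply_self hsq hw).span_eq_top_of_card_eq_finrank' (by simp [hV])
  have hvv : B (n w) (n w) = 0 := by
    rw [hskew, Pi.neg_apply, n.apply_apply_eq_zero_of_sq_eq_zero hsq, neg_zero, map_zero]
  have hvw : B (n w) w = 0 := by
    have h := hskew w w
    rw [Pi.neg_apply, map_neg, hB.eq w (n w)] at h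
    exact (mul_eq_zero.mp (by linear_combination h : (2 : K) * B (n w) w = 0)).resolve_left h2
  have hrad : B (n w) = 0 := by
    refine LinearMap.ext_on_range hspan fun i => ?_
    fin_cases i
    · simpa using hvv
    · simpa using hvw
  exact fun hnd => hw (hnd.1 (n w) fun y => by rw [hrad, LinearMap.zero_apply])

end LinearMap.BilinForm

/-- Over a field of characteristic an odd prime `ℓ`, there is no nondegenerate
symmetric bilinear form `f₀` on `F²` together with an injective homomorphism
of the cyclic group of order `ℓ` into the `f₀`-preserving automorphisms of `F²`. -/
theorem stmt_3 (ℓ : ℕ) [hp : Fact ℓ.Prime] (hodd : Odd ℓ)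
    (F : Type*) [Field F] [CharP F ℓ] :
    ¬ ∃ (f₀ : LinearMap.BilinForm F (Fin 2 → F))
        (φ : Multiplicative (ZMod ℓ) →* ((Fin 2 → F) ≃ₗ[F] (Fin 2 → F))),
      f₀.Nondegenerate ∧ f₀.IsSymm ∧ Function.Injective φ ∧
      ∀ z x y, f₀ (φ z x) (φ z y) = f₀ x y := by
  rintro ⟨f₀, φ, hnd, hsym, hinj, hpres⟩
  set g := φ (Multiplicative.ofAdd 1)
  have hg1 : g ≠ 1 := fun h => one_ne_zero (α := ZMod ℓ) (hinj (h.trans (map_one φ).symm))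
  have hgℓ : (g : Module.End F (Fin 2 → F)) ^ ℓ = 1 := by
    have := map_pow (LinearEquiv.automorphismGroup.toLinearMapMonoidHom.comp φ) (.ofAdd 1) ℓ
    rw [← ofAdd_nsmul, nsmul_one, ZMod.natCast_self, ofAdd_zero, map_one] at this
    exact this.symm
  set n := (g : Module.End F (Fin 2 → F)) - 1
  have : CharP (Module.End F (Fin 2 → F)) ℓ := charP_of_injective_algebraMap' F ℓ
  have hsq : n ^ 2 = 0 := by
    simpa [finrank_fin_fun] using
      Module.End.pow_finrank_eq_zero_of_isNilpotent ⟨ℓ, sub_one_pow_char_eq_zero ℓ hgℓ⟩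
  have hn : n ≠ 0 := fun h => hg1 (LinearEquiv.toLinearMap_injective (sub_eq_zero.mp h))
  have h2 : (2 : F) ≠ 0 := Ring.two_ne_zero <| by
    rw [ringChar.eq F ℓ]
    rintro rfl
    exact Nat.not_even_iff_odd.mpr hodd even_two
  exact f₀.not_nondegenerate_of_isSkewAdjoint_of_sq_eq_zero hsym h2 (finrank_fin_fun F)
    (f₀.isSkewAdjoint_sub_one (hpres _) hsq) hn hsq hnd
end

section
/- Let F be a field of characteristic ℓ (ℓ an odd prime), W a nonzero F-vector space, and f₀ a nondegenerate alternating bilinear form on W ⊕ W invariant under c(x,y) = (x+y,y). Then the form h(x,y) = f₀((x,0),(0,y)) is symmetric and nondegenerate on W. -/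
/-- If `f₀` is a nondegenerate alternating bilinear form on `W ⊕ W` (with `W ≠ 0`)
invariant under `c(x,y) = (x+y,y)`, then `h(x,y) = f₀((x,0),(0,y))` is a symmetric
and nondegenerate bilinear form on `W`. -/
theorem stmt_8 (ℓ : ℕ) (hℓ : ℓ.Prime) (hodd : Odd ℓ)
    (F : Type*) [Field F] [CharP F ℓ]
    (W : Type*) [AddCommGroup W] [Module F W] [Nontrivial W]
    (f₀ : LinearMap.BilinForm F (W × W)) (halt : f₀.IsAlt)
    (hnd : f₀.Nondegenerate)
    (hc : ∀ u v : W × W, f₀ (u.1 + u.2, u.2) (v.1 + v.2, v.2) = f₀ u v) :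
    (∀ x y : W, f₀ (x, 0) (0, y) = f₀ (y, 0) (0, x)) ∧
    (∀ x : W, (∀ y : W, f₀ (x, 0) (0, y) = 0) → x = 0) := by
  have hsplit : ∀ y z : W, ((y, z) : W × W) = (y, 0) + (0, z) := by
    intro y z; simp [Prod.ext_iff]
  have hW0 : ∀ x y : W, f₀ (x, 0) (y, 0) = 0 := by
    intro x y
    have h := hc (x, 0) (0, y)
    simp only [add_zero, zero_add] at h
    rw [hsplit y y, map_add] at h
    linear_combination h
  have hsymm : ∀ x y : W, f₀ (x, 0) (0, y) = f₀ (y, 0) (0, x) := by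
    intro x y
    have h := hc (0, x) (0, y)
    simp only [zero_add] at h
    rw [hsplit x x, hsplit y y] at h
    simp only [map_add, LinearMap.add_apply] at h
    rw [hW0 x y] at h
    have hskew : f₀ (0, x) (y, 0) = -f₀ (y, 0) (0, x) := by
      have := halt.neg_eq (0, x) (y, 0); linear_combination -this
    rw [hskew] at h
    linear_combination h
  refine ⟨hsymm, fun x hx => ?_⟩
  have : ((x, 0) : W × W) = 0 := by
    apply hnd.1
    intro v
    rw [show v = (v.1, 0) + (0, v.2) from by simp [Prod.ext_iff], map_add,
      hW0 x v.1, hx v.2, add_zero]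
  simpa [Prod.ext_iff] using this
end

section
/- Let ℓ ≥ 5 be a prime, O = Z_ℓ (the ℓ-adic integers), S a free Z_ℓ-module of finite rank, and A an automorphism of S of finite order such that (A − 1)² ∈ ℓ·End(S). Then A = 1. -/
/-!
If `A ≠ 1`, write `A - 1 = ℓ^a B` with `ℓ ∤ B`, which is possible because `End S` is `ℓ`-adically
separated. Since `ℓ^(a+1) ∣ (A - 1)²`, every term of the binomial expansion of
`(1 + (A - 1))^ℓ - 1` past the linear one is divisible by `ℓ^(a+2)`, so
`A^ℓ - 1 = ℓ^(a+1) (B + ℓ X)`. Iterating, the exact power of `ℓ` dividing `A^(ℓ^k) - 1` is `ℓ^(a+k)`,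
which is impossible once two of the finitely many powers `A^(ℓ^j)`, `A^(ℓ^k)` coincide.
-/

open IsLocalRing

section Ring

variable {R : Type*} [Ring R] {p : ℕ}

theorem natCast_pow_add_dvd_mul {m n : ℕ} {x y : R} (hx : (p : R) ^ m ∣ x)
    (hy : (p : R) ^ n ∣ y) : (p : R) ^ (m + n) ∣ x * y := by
  obtain ⟨d, rfl⟩ := hx
  obtain ⟨e, rfl⟩ := hy
  refine ⟨d * e, ?_⟩
  rw [pow_add, mul_assoc, ← mul_assoc d, ← ((Nat.cast_commute p d).pow_left n).eq]
  simp only [mul_assoc]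

theorem le_of_natCast_pow_mul_eq (hreg : IsLeftRegular (p : R)) {m n : ℕ} {x y : R}
    (h : (p : R) ^ m * x = (p : R) ^ n * y) (hy : ¬ (p : R) ∣ y) : m ≤ n := by
  by_contra! hnm
  obtain ⟨d, rfl⟩ := Nat.exists_eq_add_of_lt hnm
  apply hy
  refine ⟨(p : R) ^ d * x, (hreg.pow n) ?_⟩
  dsimp only
  rw [← h, ← mul_assoc, ← pow_succ, ← mul_assoc, ← pow_add, add_right_comm]

theorem natCast_pow_add_two_dvd_one_add_pow_sub (hp : p.Prime) (hp4 : 4 ≤ p) {a : ℕ} {N : R}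
    (hN : (p : R) ^ (a + 1) ∣ N * N) : (p : R) ^ (a + 2) ∣ (1 + N) ^ p - 1 - p * N := by
  have hexpand : (1 + N) ^ p - 1 - p * N =
      ∑ k ∈ Finset.range (p - 1), N * N * N ^ k * (p.choose (k + 2) : R) := by
    obtain ⟨q, rfl⟩ : ∃ q, p = q + 2 := ⟨p - 2, by omega⟩
    rw [add_comm, (Commute.one_right N).add_pow, Finset.sum_range_succ', Finset.sum_range_succ']
    simp only [one_pow, mul_one, pow_zero, Nat.choose_zero_right, Nat.choose_one_right,
      Nat.cast_one, zero_add, pow_succ', mul_assoc, ← Nat.cast_comm]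
    abel
  rw [hexpand]
  refine Finset.dvd_sum fun k hk => ?_
  have hk : k + 2 ≤ p := by have := Finset.mem_range.mp hk; omega
  rcases hk.lt_or_eq with hlt | heq
  · have hchoose : (p : R) ^ 1 ∣ (p.choose (k + 2) : R) := by
      rw [pow_one]
      exact Nat.cast_dvd_cast (hp.dvd_choose_self (by omega) hlt)
    exact natCast_pow_add_dvd_mul (m := a + 1) (n := 1) (hN.mul_right _) hchoose
  · -- the top term `N ^ p` contains `(N * N) * (N * N)`: this is where `p ≥ 4` is needed
    obtain ⟨j, rfl⟩ : ∃ j, k = j + 2 := ⟨k - 2, by omega⟩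
    have hN4 : (p : R) ^ (a + 2) ∣ N * N * (N * N) :=
      (pow_dvd_pow _ (by omega)).trans (natCast_pow_add_dvd_mul hN hN)
    rw [add_comm j 2, pow_add N 2, sq, ← mul_assoc]
    exact (hN4.mul_right _).mul_right _

theorem exists_pow_prime_sub_one_eq (hp : p.Prime) (hp4 : 4 ≤ p) {f B : R} {a : ℕ}
    (hsq : (p : R) ∣ (f - 1) * (f - 1)) (hf : f - 1 = p ^ a * B) (hB : ¬ (p : R) ∣ B) :
    ∃ B' : R, f ^ p - 1 = p ^ (a + 1) * B' ∧ ¬ (p : R) ∣ B' := by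
  have hsq' : (p : R) ^ (a + 1) ∣ (f - 1) * (f - 1) := by
    rcases a with _ | a
    · simpa using hsq
    · rw [hf]
      exact (pow_dvd_pow _ (by omega)).trans
        (natCast_pow_add_dvd_mul (dvd_mul_right _ B) (dvd_mul_right _ B))
  obtain ⟨X, hX⟩ := natCast_pow_add_two_dvd_one_add_pow_sub hp hp4 hsq'
  refine ⟨B + p * X, ?_, fun h => hB ?_⟩
  · rw [add_sub_cancel, sub_sub, sub_eq_iff_eq_add] at hX
    rw [hX, hf, mul_add, ← mul_assoc, ← pow_succ', ← mul_assoc, ← pow_succ]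
    abel
  · simpa using dvd_sub h (dvd_mul_right (p : R) X)

theorem exists_pow_prime_pow_sub_one_eq (hp : p.Prime) (hp4 : 4 ≤ p) {f B : R} {a : ℕ}
    (hsq : (p : R) ∣ (f - 1) * (f - 1)) (hf : f - 1 = p ^ a * B) (hB : ¬ (p : R) ∣ B) (k : ℕ) :
    ∃ B' : R, f ^ p ^ k - 1 = p ^ (a + k) * B' ∧ ¬ (p : R) ∣ B' := by
  induction k generalizing f a B with
  | zero => exact ⟨B, by simpa using hf, hB⟩
  | succ k ih =>
    obtain ⟨B', hf', hB'⟩ := exists_pow_prime_sub_one_eq hp hp4 hsq hf hB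
    have hsq' : (p : R) ∣ (f ^ p - 1) * (f ^ p - 1) := by
      rw [hf']
      exact ((dvd_pow_self _ a.succ_ne_zero).mul_right _).mul_right _
    rw [pow_succ', pow_mul, ← add_assoc, add_right_comm]
    exact ih hsq' hf' hB'

theorem eq_one_of_isOfFinOrder_of_natCast_dvd_sub_one_mul_sub_one (hp : p.Prime) (hp4 : 4 ≤ p)
    (hreg : IsLeftRegular (p : R)) (hsep : ∀ x : R, x ≠ 0 → FiniteMultiplicity (p : R) x)
    {f : R} (hf : IsOfFinOrder f) (hsq : (p : R) ∣ (f - 1) * (f - 1)) : f = 1 := by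
  by_contra hne
  obtain ⟨B, hB, hBp⟩ := (hsep _ (sub_ne_zero.2 hne)).exists_eq_pow_mul_and_not_dvd
  obtain ⟨j, k, hjk, hpow⟩ := hf.finite_powers.exists_lt_map_eq_of_forall_mem
    (f := fun k => f ^ p ^ k) fun k => (Submonoid.mem_powers_iff _ f).2 ⟨p ^ k, rfl⟩
  obtain ⟨Bj, hj, hBj⟩ := exists_pow_prime_pow_sub_one_eq hp hp4 hsq hB hBp j
  obtain ⟨Bk, hk, -⟩ := exists_pow_prime_pow_sub_one_eq hp hp4 hsq hB hBp k
  have := le_of_natCast_pow_mul_eq hreg (hk.symm.trans (hpow ▸ hj)) hBj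
  omega

end Ring

theorem finiteMultiplicity_natCast_of_mem_maximalIdeal {O R : Type*} [CommRing O]
    [IsNoetherianRing O] [IsLocalRing O] [Ring R] [Algebra O R] [Module.Finite O R] {p : ℕ}
    (hp : (p : O) ∈ maximalIdeal O) {x : R} (hx : x ≠ 0) : FiniteMultiplicity (p : R) x := by
  by_contra hinf
  -- Krull's intersection theorem
  refine hx (IsHausdorff.haus (I := maximalIdeal O) inferInstance x fun n => ?_)
  obtain ⟨y, rfl⟩ : (p : R) ^ n ∣ x :=
    (pow_dvd_pow _ n.le_succ).trans (not_not.1 (not_exists.1 hinf n))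
  rw [SModEq.zero, ← map_natCast (algebraMap O R), ← map_pow, ← Algebra.smul_def]
  exact Submodule.smul_mem_smul (Ideal.pow_mem_pow hp n) trivial

theorem isLeftRegular_natCast_of_isTorsionFree {O R : Type*} [CommRing O] [IsDomain O]
    [CharZero O] [Ring R] [Module O R] [Module.IsTorsionFree O R] {p : ℕ} (hp : p ≠ 0) :
    IsLeftRegular (p : R) := fun x y h =>
  Module.IsTorsionFree.isSMulRegular (IsRegular.of_ne_zero (Nat.cast_ne_zero.2 hp : (p : O) ≠ 0))
    (by simpa only [Nat.cast_smul_eq_nsmul, nsmul_eq_mul] using h)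

theorem LinearMap.exists_eq_smul_of_forall_exists_eq_smul {O M N : Type*} [CommSemiring O]
    [AddCommMonoid M] [AddCommMonoid N] [Module O M] [Module O N] {c : O}
    (hc : IsSMulRegular N c) {g : M →ₗ[O] N} (h : ∀ x, ∃ y, g x = c • y) :
    ∃ C : M →ₗ[O] N, g = c • C := by
  choose C hC using h
  refine ⟨{ toFun := C, map_add' := fun x y => hc ?_, map_smul' := fun r x => hc ?_ }, ext hC⟩
  · simp only [smul_add, ← hC, map_add]
  · simp only [← hC, map_smul, RingHom.id_apply, smul_comm c r]

/-- Unramified case of Minkowski–Serre rigidity: for a prime `ℓ ≥ 5`, a finite free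
`ℤ_ℓ`-module `S`, and a finite-order automorphism `A` of `S` with `(A - 1)² S ⊆ ℓS`,
we have `A = 1`. -/
theorem stmt_14 (ℓ : ℕ) [hp : Fact ℓ.Prime] (hge : 5 ≤ ℓ)
    (S : Type*) [AddCommGroup S] [Module ℤ_[ℓ] S] [Module.Free ℤ_[ℓ] S]
    [Module.Finite ℤ_[ℓ] S]
    (A : S ≃ₗ[ℤ_[ℓ]] S) (hA : IsOfFinOrder A)
    (hA2 : ∀ x : S, ∃ y : S,
      ((A.toLinearMap - LinearMap.id) ∘ₗ (A.toLinearMap - LinearMap.id)) x = (ℓ : ℤ_[ℓ]) • y) :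
    A = LinearEquiv.refl ℤ_[ℓ] S := by
  have hℓ : (ℓ : ℤ_[ℓ]) ≠ 0 := Nat.cast_ne_zero.2 hp.out.ne_zero
  have hℓmax : (ℓ : ℤ_[ℓ]) ∈ maximalIdeal ℤ_[ℓ] := by
    rw [PadicInt.maximalIdeal_eq_span_p]
    exact Ideal.mem_span_singleton_self _
  obtain ⟨C, hC⟩ := LinearMap.exists_eq_smul_of_forall_exists_eq_smul
    (Module.IsTorsionFree.isSMulRegular (IsRegular.of_ne_zero hℓ)) hA2
  have hsq : (ℓ : Module.End ℤ_[ℓ] S) ∣ (A.toLinearMap - 1) * (A.toLinearMap - 1) :=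
    ⟨C, by rw [← nsmul_eq_mul, ← Nat.cast_smul_eq_nsmul ℤ_[ℓ]]; exact hC⟩
  exact LinearEquiv.toLinearMap_injective
    (eq_one_of_isOfFinOrder_of_natCast_dvd_sub_one_mul_sub_one hp.out (by omega)
      (isLeftRegular_natCast_of_isTorsionFree (O := ℤ_[ℓ]) hp.out.ne_zero)
      (fun _ hx => finiteMultiplicity_natCast_of_mem_maximalIdeal hℓmax hx)
      (LinearEquiv.automorphismGroup.toLinearMapMonoidHom.isOfFinOrder hA) hsq)
end
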